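/- The torus T_{R,r} embedded in the Heisenberg group has no characteristic points: at every point q of T_{R,r}, the tangent plane T_q T_{R,r} is different from the Heisenberg plane D_q. -/

import Mathlib

/-!
The horizontal planes are the kernels of the contact form `dz - (y dx - x dy) / 2`. Along the
parallels `φ ↦ Φ(θ, φ)` of the torus the tangent vector is `ρ (-sin φ, cos φ, 0)`, where
`ρ = R + r cos θ > 0` is the distance to the axis, and the contact form takes the value
`ρ² / 2 ≠ 0` on it. So this tangent vector is never horizontal.
-/

open Real Submodule

noncomputable section

def heisenbergContactForm (q : ℝ × ℝ × ℝ) : ℝ × ℝ × ℝ →ₗ[ℝ] ℝ where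
  toFun v := v.2.2 - (q.2.1 * v.1 - q.1 * v.2.1) / 2
  map_add' v w := by
    simp only [Prod.fst_add, Prod.snd_add]
    ring
  map_smul' c v := by
    simp only [Prod.smul_fst, Prod.smul_snd, smul_eq_mul, RingHom.id_apply]
    ring

theorem heisenbergContactForm_apply (q v : ℝ × ℝ × ℝ) :
    heisenbergContactForm q v = v.2.2 - (q.2.1 * v.1 - q.1 * v.2.1) / 2 :=
  rfl

theorem span_horizontal_le_ker_heisenbergContactForm (q : ℝ × ℝ × ℝ) :
    span ℝ {((1 : ℝ), (0 : ℝ), q.2.1 / 2), ((0 : ℝ), (1 : ℝ), -q.1 / 2)} ≤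
      LinearMap.ker (heisenbergContactForm q) := by
  rw [span_le, Set.insert_subset_iff, Set.singleton_subset_iff]
  constructor <;>
  · simp only [SetLike.mem_coe, LinearMap.mem_ker, heisenbergContactForm_apply]
    ring

theorem fderiv_apply_zero_one_eq_of_hasDerivAt {E : Type*} [NormedAddCommGroup E]
    [NormedSpace ℝ E] {f : ℝ × ℝ → E} {θ : ℝ × ℝ} {v : E} (hf : DifferentiableAt ℝ f θ)
    (hv : HasDerivAt (fun t => f (θ.1, t)) v θ.2) :
    fderiv ℝ f θ (0, 1) = v := by
  have hline : HasDerivAt (fun t : ℝ => (θ.1, t)) ((0 : ℝ), (1 : ℝ)) θ.2 :=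
    (hasDerivAt_const θ.2 θ.1).prodMk (hasDerivAt_id θ.2)
  exact (hf.hasFDerivAt.comp_hasDerivAt θ.2 hline).unique hv

def torusParametrization (R r : ℝ) (θ : ℝ × ℝ) : ℝ × ℝ × ℝ :=
  ((R + r * cos θ.1) * cos θ.2, (R + r * cos θ.1) * sin θ.2, r * sin θ.1)

theorem differentiable_torusParametrization (R r : ℝ) :
    Differentiable ℝ (torusParametrization R r) := by
  unfold torusParametrization
  fun_prop

theorem hasDerivAt_torusParametrization_snd (R r θ φ : ℝ) :
    HasDerivAt (fun t => torusParametrization R r (θ, t))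
      (-((R + r * cos θ) * sin φ), (R + r * cos θ) * cos φ, 0) φ := by
  have hx : HasDerivAt (fun t => (R + r * cos θ) * cos t) (-((R + r * cos θ) * sin φ)) φ := by
    simpa only [mul_neg] using (hasDerivAt_cos φ).const_mul (R + r * cos θ)
  have hy := (hasDerivAt_sin φ).const_mul (R + r * cos θ)
  exact hx.prodMk (hy.prodMk (hasDerivAt_const φ (r * sin θ)))

theorem heisenbergContactForm_fderiv_torusParametrization (R r : ℝ) (θ : ℝ × ℝ) :
    heisenbergContactForm (torusParametrization R r θ)
        (fderiv ℝ (torusParametrization R r) θ (0, 1)) =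
      (R + r * cos θ.1) ^ 2 / 2 := by
  rw [fderiv_apply_zero_one_eq_of_hasDerivAt (differentiable_torusParametrization R r θ)
    (hasDerivAt_torusParametrization_snd R r θ.1 θ.2), heisenbergContactForm_apply]
  simp only [torusParametrization]
  linear_combination (R + r * cos θ.1) ^ 2 / 2 * sin_sq_add_cos_sq θ.2

end

/-- The torus `T_{R,r}` embedded in the Heisenberg group has no characteristic points: at
every point the tangent plane of the torus differs from the Heisenberg plane. -/
theorem torus_no_characteristic_points (R r : ℝ) (hr : 0 < r) (hrR : r < R) :
    let F₁ : ℝ × ℝ × ℝ → ℝ × ℝ × ℝ := fun q => (1, 0, q.2.1 / 2)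
    let F₂ : ℝ × ℝ × ℝ → ℝ × ℝ × ℝ := fun q => (0, 1, -q.1 / 2)
    let Φ : ℝ × ℝ → ℝ × ℝ × ℝ := fun θ =>
      ((R + r * Real.cos θ.1) * Real.cos θ.2, (R + r * Real.cos θ.1) * Real.sin θ.2,
        r * Real.sin θ.1)
    ∀ θ : ℝ × ℝ,
      Submodule.span ℝ {fderiv ℝ Φ θ (1, 0), fderiv ℝ Φ θ (0, 1)} ≠
        Submodule.span ℝ {F₁ (Φ θ), F₂ (Φ θ)} := by
  intro F₁ F₂ Φ θ h
  have hρ : 0 < R + r * cos θ.1 := by nlinarith [neg_one_le_cos θ.1]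
  have htangent : fderiv ℝ Φ θ (0, 1) ∈ span ℝ {F₁ (Φ θ), F₂ (Φ θ)} :=
    h ▸ subset_span (Set.mem_insert_of_mem _ rfl)
  have hvanish : heisenbergContactForm (Φ θ) (fderiv ℝ Φ θ (0, 1)) = 0 :=
    span_horizontal_le_ker_heisenbergContactForm (Φ θ) htangent
  have hvalue : heisenbergContactForm (Φ θ) (fderiv ℝ Φ θ (0, 1)) = (R + r * cos θ.1) ^ 2 / 2 :=
    heisenbergContactForm_fderiv_torusParametrization R r θ
  have hpos : 0 < (R + r * cos θ.1) ^ 2 / 2 := div_pos (pow_pos hρ 2) two_pos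
  linarith
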